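/- arXiv:2010.03054 — 2 statements merged into one kernel-verified Lean document; each statement's English description precedes it below -/
import Mathlib

section
/- Let S be a symmetrically graded ring, M a symmetrically graded left S-module, and h ∈ G. Then the graded submodule S M_h (with (S M_h)_g = S_{g h⁻¹} M_h) has symmetrically graded quotient M/(S M_h), and (M/(S M_h))_h = 0. -/
open Pointwise

section Defs

variable {G : Type} [AddGroup G] [DecidableEq G]
variable {A : Type} [Ring A]
variable {M : Type} [AddCommGroup M] [Module A M]

/-- The additive subgroup of `M` consisting of finite sums of products `a • m`
with `a ∈ S` and `m ∈ N`. -/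
def prodSMul (S : AddSubgroup A) (N : AddSubgroup M) : AddSubgroup M where
  __ := S.toAddSubmonoid • N.toAddSubmonoid
  neg_mem' {x} hx := by
    refine AddSubmonoid.smul_induction_on hx (fun a ha m hm => ?_) (fun x y hx hy => ?_)
    · rw [show -(a • m) = (-a) • m by rw [neg_smul]]
      exact AddSubmonoid.smul_mem_smul (S.neg_mem ha) hm
    · rw [neg_add]
      exact (S.toAddSubmonoid • N.toAddSubmonoid).add_mem hx hy

/-- A (possibly non-unital) ring, here an additive subgroup of `A` closed under
multiplication, is *s-unital* if every element has a left and a right local unit in it. -/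
def IsSUnitalSub (I : AddSubgroup A) : Prop :=
  ∀ a ∈ I, ∃ u ∈ I, ∃ v ∈ I, u * a = a ∧ a * v = a

variable (𝒜 : G → AddSubgroup A)

/-- `S` is symmetrically graded if `S_g S_{g⁻¹} S_g = S_g` for all `g`. -/
def IsSymmetricallyGraded : Prop := ∀ g : G, 𝒜 g * 𝒜 (-g) * 𝒜 g = 𝒜 g

/-- `S` is nearly epsilon-strongly graded if each `S_g` is an s-unital
`(S_g S_{g⁻¹}, S_{g⁻¹} S_g)`-bimodule: for every `s ∈ S_g` there are
`u ∈ S_g S_{g⁻¹}` and `v ∈ S_{g⁻¹} S_g` with `u s = s = s v`. -/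
def IsNearlyEpsilonStrong : Prop :=
  ∀ g : G, ∀ s ∈ 𝒜 g, ∃ u ∈ 𝒜 g * 𝒜 (-g), ∃ v ∈ 𝒜 (-g) * 𝒜 g, u * s = s ∧ s * v = s

/-!
Every `S_{k h⁻¹} M_h` lies in `M_k`, so the homogeneous components of `S M_h` are read off
from the independence of the `M_k`. Since `M_h = S_h S_{h⁻¹} M_h ⊆ S_e M_h`, the component
`M_h` lies in `S M_h`, and the quotient inherits `M_g = S_g S_{g⁻¹} M_g` from `M`.
-/

theorem prodSMul_le {S : AddSubgroup A} {N P : AddSubgroup M} :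
    prodSMul S N ≤ P ↔ ∀ a ∈ S, ∀ m ∈ N, a • m ∈ P :=
  AddSubmonoid.smul_le

theorem prodSMul_mono_left {S S' : AddSubgroup A} (hSS' : S ≤ S') (N : AddSubgroup M) :
    prodSMul S N ≤ prodSMul S' N :=
  AddSubmonoid.smul_le_smul_left hSS'

theorem SetLike.GradedMul.addSubgroup_mul_le {ι R : Type*} [Add ι] [NonUnitalNonAssocRing R]
    (𝒜 : ι → AddSubgroup R) [SetLike.GradedMul 𝒜] (i j : ι) :
    𝒜 i * 𝒜 j ≤ 𝒜 (i + j) := by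
  rw [← AddSubgroup.toAddSubmonoid_le, AddSubgroup.mul_toAddSubmonoid, AddSubmonoid.mul_le]
  exact fun _ ha _ hb => SetLike.GradedMul.mul_mem (A := 𝒜) ha hb

theorem SetLike.GradedSMul.prodSMul_le {ι κ : Type*} [VAdd ι κ]
    (𝒜 : ι → AddSubgroup A) (ℳ : κ → AddSubgroup M) [SetLike.GradedSMul 𝒜 ℳ] (i : ι) (j : κ) :
    prodSMul (𝒜 i) (ℳ j) ≤ ℳ (i +ᵥ j) :=
  _root_.prodSMul_le.2 fun _ ha _ hm => SetLike.GradedSMul.smul_mem ha hm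

theorem DirectSum.Decomposition.iSupIndep_addSubgroup {ι N : Type*} [DecidableEq ι]
    [AddCommGroup N] (ℳ : ι → AddSubgroup N) [DirectSum.Decomposition ℳ] : iSupIndep ℳ := by
  rw [← iSupIndep_map_orderIso_iff AddSubgroup.toIntSubmodule]
  exact DirectSum.IsInternal.submodule_iSupIndep (DirectSum.Decomposition.isInternal ℳ)

theorem iSupIndep.iSup_inf_eq_of_le {ι α : Type*} [CompleteLattice α] [IsModularLattice α]
    {ℳ N : ι → α} (hℳ : iSupIndep ℳ) (hN : ∀ k, N k ≤ ℳ k) (g : ι) :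
    (⨆ k, N k) ⊓ ℳ g = N g := by
  have hrest : (⨆ (k) (_ : k ≠ g), N k) ⊓ ℳ g = ⊥ :=
    ((hℳ g).mono_right (iSup₂_mono fun k _ => hN k)).symm.eq_bot
  rw [iSup_split_single N g, sup_inf_assoc_of_le _ (hN g), hrest, sup_bot_eq]

theorem quotient_by_SMh_symmetrically_graded_general
    {G : Type} [AddGroup G] [DecidableEq G]
    {A : Type} [Ring A] (𝒜 : G → AddSubgroup A) [GradedRing 𝒜]
    {M : Type} [AddCommGroup M] [Module A M]
    (ℳ : G → AddSubgroup M) [SetLike.GradedSMul 𝒜 ℳ] [DirectSum.Decomposition ℳ]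
    (hM : ∀ g : G, ℳ g = prodSMul (𝒜 g * 𝒜 (-g)) (ℳ g))
    (h : G) :
    -- `S M_h` is a graded submodule: its `g`-component is `S_{g h⁻¹} M_h`
    (∀ g : G, (⨆ k : G, prodSMul (𝒜 (k + -h)) (ℳ h)) ⊓ ℳ g
        = prodSMul (𝒜 (g + -h)) (ℳ h)) ∧
    -- the quotient `M/(S M_h)` is symmetrically graded
    (∀ g : G, ℳ g ≤ prodSMul (𝒜 g * 𝒜 (-g)) (ℳ g)
        ⊔ ⨆ k : G, prodSMul (𝒜 (k + -h)) (ℳ h)) ∧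
    -- and `(M/(S M_h))_h = 0`
    ℳ h ≤ ⨆ k : G, prodSMul (𝒜 (k + -h)) (ℳ h) := by
  have hcomponent (k : G) : prodSMul (𝒜 (k + -h)) (ℳ h) ≤ ℳ k := by
    simpa only [vadd_eq_add, neg_add_cancel_right] using
      SetLike.GradedSMul.prodSMul_le 𝒜 ℳ (k + -h) h
  refine ⟨(DirectSum.Decomposition.iSupIndep_addSubgroup ℳ).iSup_inf_eq_of_le hcomponent,
    fun g => (hM g).le.trans le_sup_left, ?_⟩
  calc ℳ h = prodSMul (𝒜 h * 𝒜 (-h)) (ℳ h) := hM h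
    _ ≤ prodSMul (𝒜 (h + -h)) (ℳ h) :=
      prodSMul_mono_left (SetLike.GradedMul.addSubgroup_mul_le 𝒜 h (-h)) _
    _ ≤ ⨆ k : G, prodSMul (𝒜 (k + -h)) (ℳ h) :=
      le_iSup (fun k => prodSMul (𝒜 (k + -h)) (ℳ h)) h

/-- Let `S` be symmetrically graded and `M` a symmetrically graded
left `S`-module, `h ∈ G`. Then the graded submodule `S M_h` (with
`(S M_h)_g = S_{g h⁻¹} M_h`) satisfies: the quotient `M/(S M_h)` is symmetrically
graded and its `h`-component vanishes. -/
theorem quotient_by_SMh_symmetrically_graded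
    {G : Type} [AddGroup G] [DecidableEq G]
    {A : Type} [Ring A] (𝒜 : G → AddSubgroup A) [GradedRing 𝒜]
    (hS : IsSymmetricallyGraded 𝒜)
    {M : Type} [AddCommGroup M] [Module A M]
    (ℳ : G → AddSubgroup M) [SetLike.GradedSMul 𝒜 ℳ] [DirectSum.Decomposition ℳ]
    (hM : ∀ g : G, ℳ g = prodSMul (𝒜 g * 𝒜 (-g)) (ℳ g))
    (h : G) :
    -- `S M_h` is a graded submodule: its `g`-component is `S_{g h⁻¹} M_h`
    (∀ g : G, (⨆ k : G, prodSMul (𝒜 (k + -h)) (ℳ h)) ⊓ ℳ g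
        = prodSMul (𝒜 (g + -h)) (ℳ h)) ∧
    -- the quotient `M/(S M_h)` is symmetrically graded
    (∀ g : G, ℳ g ≤ prodSMul (𝒜 g * 𝒜 (-g)) (ℳ g)
        ⊔ ⨆ k : G, prodSMul (𝒜 (k + -h)) (ℳ h)) ∧
    -- and `(M/(S M_h))_h = 0`
    ℳ h ≤ ⨆ k : G, prodSMul (𝒜 (k + -h)) (ℳ h) :=
  quotient_by_SMh_symmetrically_graded_general 𝒜 ℳ hM h
end Defs
end

section
/- Let S be a unital epsilon-strongly G-graded ring which is an epsilon-crossed product, and let e be an epsilon-central element of B(E_G)*. Then the strongly graded ring (eS)_{N(e)} = ⊕_{g∈N(e)} e S_g is a crossed product, i.e., each e S_g contains a unit of eS. -/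
open Pointwise

section Defs

variable {G : Type} [AddGroup G] [DecidableEq G]
variable {A : Type} [Ring A]
variable {M : Type} [AddCommGroup M] [Module A M]

variable (𝒜 : G → AddSubgroup A)

section EpsilonCentral

variable {G : Type} [AddGroup G] [DecidableEq G]
variable {A : Type} [Ring A]

/-- `r` is an epsilon-central element for the family `ε`: a minimal nonzero element of
the boolean semigroup generated by `{ε_g : g ∈ G}` that is central in `S`. -/
def IsEpsilonCentral (ε : G → A) (r : A) : Prop :=
  r ∈ Subsemigroup.closure (Set.range ε) ∧ r ≠ 0 ∧
    (∀ a ∈ Subsemigroup.closure (Set.range ε), a ≠ 0 → a * r = a → a = r) ∧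
    ∀ x : A, r * x = x * r

/-- The image `e S_g` of a homogeneous component under left multiplication by `e`. -/
def cornerComponent (e : A) (S : AddSubgroup A) : AddSubgroup A :=
  S.map (AddMonoidHom.mulLeft e)

end EpsilonCentral

end Defs

/-!
Every `ε g` factors as `s t` with `s ∈ S_g`, `t ∈ S_{-g}`, and is a left identity on `S_g`
and a right identity on `S_{-g}`; hence `ε g x = ε g x ε g = x ε g` for every `x ∈ S_0`.
So the `ε g` are pairwise commuting idempotents, and the epsilon-central element `e`, being
a product of them, is a central idempotent. Minimality of `e` then shows that `N(e)` is closed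
under inverses: for `g ∈ N(e)` and `ε g = s t`, the product `e ε (-g)` cannot vanish, since
otherwise `e = e s t = s (e ε (-g)) t = 0`. Thus `e s` and `e t` are mutually inverse in `eS`.
-/

theorem Subsemigroup.isIdempotentElem_of_mem_closure {M : Type*} [Semigroup M] {s : Set M}
    (hcomm : ∀ a ∈ s, ∀ b ∈ s, a * b = b * a) (hidem : ∀ a ∈ s, IsIdempotentElem a)
    {x : M} (hx : x ∈ closure s) : IsIdempotentElem x := by
  have := isMulCommutative_closure M hcomm
  induction hx using closure_induction with
  | mem x hx => exact hidem x hx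
  | mul x y hx hy ihx ihy => exact ihx.mul_of_commute (setLike_mul_comm hx hy) ihy

theorem mul_mul_mul_of_isIdempotentElem_of_central {A : Type*} [Semigroup A] {e : A}
    (hidem : IsIdempotentElem e) (hcomm : ∀ x, e * x = x * e) (s t : A) :
    e * s * (e * t) = e * (s * t) := by
  rw [hcomm s, mul_assoc, ← mul_assoc e, hidem.eq, ← mul_assoc, ← hcomm s, mul_assoc]

section EpsilonCrossed

variable {G A : Type*} [AddGroup G] [Ring A] {𝒜 : G → AddSubgroup A} {ε : G → A}

theorem mul_eps_eq_self_of_mem_neg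
    (hunit : ∀ g : G, ∀ s ∈ 𝒜 g, ε g * s = s ∧ s * ε (-g) = s) {g : G} {t : A}
    (ht : t ∈ 𝒜 (-g)) : t * ε g = t := by
  simpa only [neg_neg] using (hunit (-g) t ht).2

theorem isIdempotentElem_eps (hunit : ∀ g : G, ∀ s ∈ 𝒜 g, ε g * s = s ∧ s * ε (-g) = s)
    (hfac : ∀ g : G, ∃ s ∈ 𝒜 g, ∃ t ∈ 𝒜 (-g), s * t = ε g) (g : G) :
    IsIdempotentElem (ε g) := by
  obtain ⟨s, hs, t, -, hst⟩ := hfac g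
  rw [IsIdempotentElem]
  nth_rw 2 [← hst]
  rw [← mul_assoc, (hunit g s hs).1, hst]

variable [SetLike.GradedMonoid 𝒜]

theorem eps_mem_zero (hfac : ∀ g : G, ∃ s ∈ 𝒜 g, ∃ t ∈ 𝒜 (-g), s * t = ε g) (g : G) :
    ε g ∈ 𝒜 0 := by
  obtain ⟨s, hs, t, ht, hst⟩ := hfac g
  rw [← hst]
  simpa only [add_neg_cancel] using SetLike.mul_mem_graded hs ht

theorem commute_eps_of_mem_zero (hunit : ∀ g : G, ∀ s ∈ 𝒜 g, ε g * s = s ∧ s * ε (-g) = s)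
    (hfac : ∀ g : G, ∃ s ∈ 𝒜 g, ∃ t ∈ 𝒜 (-g), s * t = ε g) (g : G) {x : A}
    (hx : x ∈ 𝒜 0) : Commute (ε g) x := by
  obtain ⟨s, hs, t, ht, hst⟩ := hfac g
  have htx : t * x ∈ 𝒜 (-g) := by simpa only [add_zero] using SetLike.mul_mem_graded ht hx
  have hxs : x * s ∈ 𝒜 g := by simpa only [zero_add] using SetLike.mul_mem_graded hx hs
  calc ε g * x = s * (t * x) := by rw [← hst, mul_assoc]
    _ = s * (t * x * ε g) := by rw [mul_eps_eq_self_of_mem_neg hunit htx]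
    _ = ε g * (x * s) * t := by rw [← hst]; simp only [mul_assoc]
    _ = x * ε g := by rw [(hunit g _ hxs).1, mul_assoc, hst]

theorem isIdempotentElem_of_mem_closure_range_eps
    (hunit : ∀ g : G, ∀ s ∈ 𝒜 g, ε g * s = s ∧ s * ε (-g) = s)
    (hfac : ∀ g : G, ∃ s ∈ 𝒜 g, ∃ t ∈ 𝒜 (-g), s * t = ε g) {a : A}
    (ha : a ∈ Subsemigroup.closure (Set.range ε)) : IsIdempotentElem a := by
  refine Subsemigroup.isIdempotentElem_of_mem_closure ?_ ?_ ha
  · rintro _ ⟨g, rfl⟩ _ ⟨h, rfl⟩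
    exact commute_eps_of_mem_zero hunit hfac g (eps_mem_zero hfac h)
  · rintro _ ⟨g, rfl⟩
    exact isIdempotentElem_eps hunit hfac g

end EpsilonCrossed

namespace IsEpsilonCentral

variable {G A : Type} [Ring A] {ε : G → A} {e : A}

theorem mul_eq_self_of_mul_ne_zero (he : IsEpsilonCentral ε e) (hidem : IsIdempotentElem e)
    {a : A} (ha : a ∈ Subsemigroup.closure (Set.range ε)) (hne : e * a ≠ 0) : e * a = e := by
  refine he.2.2.1 _ (Subsemigroup.mul_mem _ he.1 ha) hne ?_
  rw [mul_assoc, ← he.2.2.2 a, ← mul_assoc, hidem.eq]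

theorem mul_eps_neg_eq_self [AddGroup G] {𝒜 : G → AddSubgroup A} (he : IsEpsilonCentral ε e)
    (hidem : IsIdempotentElem e) (hunit : ∀ g : G, ∀ s ∈ 𝒜 g, ε g * s = s ∧ s * ε (-g) = s)
    {g : G} {s t : A} (hs : s ∈ 𝒜 g) (hst : s * t = ε g) (hg : e * ε g = e) :
    e * ε (-g) = e := by
  refine he.mul_eq_self_of_mul_ne_zero hidem (Subsemigroup.subset_closure ⟨-g, rfl⟩) ?_
  intro h
  apply he.2.1
  calc e = e * (s * ε (-g)) * t := by rw [(hunit g s hs).2, mul_assoc, hst, hg]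
    _ = s * (e * ε (-g)) * t := by rw [← mul_assoc, he.2.2.2 s, mul_assoc s]
    _ = 0 := by rw [h, mul_zero, zero_mul]

end IsEpsilonCentral

theorem corner_crossed_product_of_epsilonCrossed_general
    {G : Type} [AddGroup G] [DecidableEq G]
    {A : Type} [Ring A] (𝒜 : G → AddSubgroup A) [GradedRing 𝒜]
    (ε : G → A)
    (hunit : ∀ g : G, ∀ s ∈ 𝒜 g, ε g * s = s ∧ s * ε (-g) = s)
    (hcross : ∀ g : G, ∃ s ∈ 𝒜 g, ∃ t ∈ 𝒜 (-g), s * t = ε g ∧ t * s = ε (-g))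
    (e : A) (he : IsEpsilonCentral ε e) :
    ∀ g : G, e * ε g = e →
      ∃ u v : A, u ∈ cornerComponent e (𝒜 g) ∧ (∃ t : A, v = e * t) ∧
        u * v = e ∧ v * u = e := by
  intro g hg
  have hfac : ∀ h : G, ∃ s ∈ 𝒜 h, ∃ t ∈ 𝒜 (-h), s * t = ε h := fun h =>
    let ⟨s, hs, t, ht, hst, _⟩ := hcross h
    ⟨s, hs, t, ht, hst⟩
  have hidem : IsIdempotentElem e := isIdempotentElem_of_mem_closure_range_eps hunit hfac he.1
  obtain ⟨s, hs, t, -, hst, hts⟩ := hcross g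
  have hg' : e * ε (-g) = e := he.mul_eps_neg_eq_self hidem hunit hs hst hg
  refine ⟨e * s, e * t, ⟨s, hs, rfl⟩, ⟨t, rfl⟩, ?_, ?_⟩
  · rw [mul_mul_mul_of_isIdempotentElem_of_central hidem he.2.2.2, hst, hg]
  · rw [mul_mul_mul_of_isIdempotentElem_of_central hidem he.2.2.2, hts, hg']

/-- If `S` is an epsilon-crossed product and `e` is epsilon-central,
then the strongly graded ring `(eS)_{N(e)}` is a crossed product: each `e S_g`
(`g ∈ N(e)`) contains a unit of the ring `eS` (with identity `e`). -/
theorem corner_crossed_product_of_epsilonCrossed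
    {G : Type} [AddGroup G] [DecidableEq G]
    {A : Type} [Ring A] (𝒜 : G → AddSubgroup A) [GradedRing 𝒜]
    (ε : G → A)
    (hmem : ∀ g : G, ε g ∈ 𝒜 g * 𝒜 (-g))
    (hunit : ∀ g : G, ∀ s ∈ 𝒜 g, ε g * s = s ∧ s * ε (-g) = s)
    (hcross : ∀ g : G, ∃ s ∈ 𝒜 g, ∃ t ∈ 𝒜 (-g), s * t = ε g ∧ t * s = ε (-g))
    (e : A) (he : IsEpsilonCentral ε e) :
    ∀ g : G, e * ε g = e →
      ∃ u v : A, u ∈ cornerComponent e (𝒜 g) ∧ (∃ t : A, v = e * t) ∧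
        u * v = e ∧ v * u = e :=
  corner_crossed_product_of_epsilonCrossed_general 𝒜 ε hunit hcross e he
end
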